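/- Let E be a directed graph, K a field, and x, y ∈ ∂E paths that are not rational. Then V_{[x]} ≅ V_{[y]} as (non-graded) L_K(E)-modules if and only if [x] = [y]. In particular, if x and y are singular vertices, then V_{[x]} ≅ V_{[y]} if and only if x = y. -/

import Mathlib

open scoped Classical

/-- A directed graph: vertices, edges, source and range maps. -/
structure DirGraph : Type 1 where
  V : Type
  E : Type
  s : E → V
  r : E → V

namespace DirGraph

variable (G : DirGraph)

/-- A finite path: a source vertex together with a compatible list of edges
(the empty list gives the path of length 0 at `src`). -/
structure FinPath where
  src : G.V
  edges : List G.E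
  src_eq : ∀ e ∈ edges.head?, G.s e = src
  chain : edges.Chain' (fun e f => G.r e = G.s f)

variable {G}

/-- The range of a finite path. -/
def FinPath.rng (μ : G.FinPath) : G.V :=
  ((μ.edges.getLast?).map G.r).getD μ.src

/-- The length of a finite path. -/
def FinPath.length (μ : G.FinPath) : ℕ := μ.edges.length

variable (G)

/-- An infinite path. -/
structure InfPath where
  edges : ℕ → G.E
  chain : ∀ n, G.r (edges n) = G.s (edges (n + 1))

/-- The source of an infinite path. -/
def InfPath.src {G : DirGraph} (p : G.InfPath) : G.V := G.s (p.edges 0)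

def IsSink (v : G.V) : Prop := ∀ e, G.s e ≠ v

def IsInfEmitter (v : G.V) : Prop := {e | G.s e = v}.Infinite

def IsSingular (v : G.V) : Prop := IsSink G v ∨ IsInfEmitter G v

/-- Boundary paths: infinite paths, together with finite paths ending in a singular vertex. -/
def BPath : Type := {x : G.FinPath ⊕ G.InfPath // ∀ μ, x = Sum.inl μ → IsSingular G μ.rng}

variable {G}

/-- The source of a boundary path. -/
def BPath.src (x : G.BPath) : G.V :=
  match x.1 with
  | Sum.inl μ => μ.src
  | Sum.inr p => p.src

def BPath.IsInfinite (x : G.BPath) : Prop := ∃ p, x.1 = Sum.inr p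

/-- `IsCat μ p x` means `x = μ p`, i.e. `x` is the concatenation of the finite path `μ`
with the boundary path `p` (in particular `r(μ) = s(p)`). -/
def IsCat (μ : G.FinPath) (p x : G.BPath) : Prop :=
  μ.rng = p.src ∧
  match p.1, x.1 with
  | Sum.inl q, Sum.inl ξ => ξ.src = μ.src ∧ ξ.edges = μ.edges ++ q.edges
  | Sum.inr q, Sum.inr ξ =>
      (∀ (i : ℕ) (h : i < μ.edges.length), ξ.edges i = μ.edges.get ⟨i, h⟩) ∧
      (∀ i : ℕ, ξ.edges (μ.edges.length + i) = q.edges i)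
  | _, _ => False

/-- `x ∼_k y` : tail equivalence with lag `k`. -/
def TailEqLag (x y : G.BPath) (k : ℤ) : Prop :=
  ∃ (μ ν : G.FinPath) (p : G.BPath),
    IsCat μ p x ∧ IsCat ν p y ∧ (μ.length : ℤ) - (ν.length : ℤ) = k

/-- Tail equivalence. -/
def TailEq (x y : G.BPath) : Prop := ∃ k, TailEqLag x y k

/-- The tail-equivalence class (orbit) of a boundary path. -/
def orbit (x : G.BPath) : Set G.BPath := {y | TailEq y x}

/-- A closed path: positive length, same source and range. -/
def FinPath.IsClosed (c : G.FinPath) : Prop := 0 < c.length ∧ c.rng = c.src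

/-- A boundary path is rational if it is tail equivalent to `c^∞` for some closed path `c`;
here `c^∞` is characterized as the unique boundary path `p` with `p = c p`. -/
def IsRational (x : G.BPath) : Prop :=
  ∃ (c : G.FinPath) (p : G.BPath), 0 < c.length ∧ IsCat c p p ∧ TailEq x p

/-- A simple closed path: a closed path which is not a proper power of a closed path. -/
def FinPath.IsSimpleClosed (c : G.FinPath) : Prop :=
  c.IsClosed ∧
    ¬ ∃ (d : G.FinPath) (n : ℕ), 2 ≤ n ∧ d.IsClosed ∧ c.src = d.src ∧
        c.edges = (List.replicate n d.edges).flatten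

/-- A cycle: a closed path passing through no vertex twice. -/
def FinPath.IsCycle (c : G.FinPath) : Prop := c.IsClosed ∧ (c.edges.map G.s).Nodup

/-- An exit for a finite path. -/
def FinPath.HasExit (c : G.FinPath) : Prop :=
  ∃ (i : ℕ) (h : i < c.edges.length) (e : G.E),
    G.s e = G.s (c.edges.get ⟨i, h⟩) ∧ e ≠ c.edges.get ⟨i, h⟩

/-- `c` is a rotation of `d`. -/
def FinPath.IsRotationOf (c d : G.FinPath) : Prop := ∃ i, c.edges = d.edges.rotate i

/-- A maximal cycle: a cycle such that any cycle from which there is a finite path to its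
source is a rotation of it. -/
def FinPath.IsMaxCycle (c : G.FinPath) : Prop :=
  c.IsCycle ∧ ∀ d : G.FinPath, d.IsCycle →
    (∃ μ : G.FinPath, μ.src = d.src ∧ μ.rng = c.src) → d.IsRotationOf c

/-- A maximal sink: a sink with no finite path from the source of any cycle to it. -/
def IsMaxSink (G : DirGraph) (v : G.V) : Prop :=
  IsSink G v ∧ ¬ ∃ (d μ : G.FinPath), d.IsCycle ∧ μ.src = d.src ∧ μ.rng = v

/-- A graph is row-finite if every vertex emits finitely many edges. -/
def RowFinite (G : DirGraph) : Prop := ∀ v : G.V, {e | G.s e = v}.Finite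

/-- The set of predecessors of a vertex. -/
def preds (G : DirGraph) (v : G.V) : Set G.V := {w | ∃ μ : G.FinPath, μ.src = w ∧ μ.rng = v}

/-- The finite path of length 0 at a vertex. -/
def vertexPath (G : DirGraph) (v : G.V) : G.FinPath :=
  ⟨v, [], by intro e he; simp at he, List.isChain_nil⟩

/-- A singular vertex, seen as a boundary path. -/
def vertexBPath (G : DirGraph) (v : G.V) (h : IsSingular G v) : G.BPath :=
  ⟨Sum.inl (vertexPath G v), by
    intro μ hμ
    injection hμ with h2
    subst h2
    exact h⟩

/-- The finite path consisting of a single edge. -/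
def singleE (G : DirGraph) (e : G.E) : G.FinPath :=
  ⟨G.s e, [e], by
    intro f hf
    simp only [List.head?_cons, Option.mem_def, Option.some.injEq] at hf
    subst hf
    rfl, List.isChain_singleton e⟩

/-- `a_μ`: the product of the values of `a` along a finite path. -/
def aval {G : DirGraph} {K : Type} [Field K] (a : G.E → K) (μ : G.FinPath) : K :=
  (μ.edges.map a).prod

/-! ## The Leavitt path algebra -/

/-- Generators of the Leavitt path algebra: vertices, edges and ghost edges. -/
inductive Gen (G : DirGraph) : Type
  | vtx : G.V → Gen G
  | edg : G.E → Gen G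
  | ghd : G.E → Gen G

/-- The defining relations of the Leavitt path algebra. -/
inductive LRel (G : DirGraph) (K : Type) [Field K] :
    FreeAlgebra K (Gen G) → FreeAlgebra K (Gen G) → Prop
  | vv_eq (v : G.V) :
      LRel G K (FreeAlgebra.ι K (Gen.vtx v) * FreeAlgebra.ι K (Gen.vtx v))
        (FreeAlgebra.ι K (Gen.vtx v))
  | vv_ne {v w : G.V} (h : v ≠ w) :
      LRel G K (FreeAlgebra.ι K (Gen.vtx v) * FreeAlgebra.ι K (Gen.vtx w)) 0
  | e1l (e : G.E) :
      LRel G K (FreeAlgebra.ι K (Gen.vtx (G.s e)) * FreeAlgebra.ι K (Gen.edg e))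
        (FreeAlgebra.ι K (Gen.edg e))
  | e1r (e : G.E) :
      LRel G K (FreeAlgebra.ι K (Gen.edg e) * FreeAlgebra.ι K (Gen.vtx (G.r e)))
        (FreeAlgebra.ι K (Gen.edg e))
  | e2l (e : G.E) :
      LRel G K (FreeAlgebra.ι K (Gen.vtx (G.r e)) * FreeAlgebra.ι K (Gen.ghd e))
        (FreeAlgebra.ι K (Gen.ghd e))
  | e2r (e : G.E) :
      LRel G K (FreeAlgebra.ι K (Gen.ghd e) * FreeAlgebra.ι K (Gen.vtx (G.s e)))
        (FreeAlgebra.ι K (Gen.ghd e))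
  | ck1_eq (e : G.E) :
      LRel G K (FreeAlgebra.ι K (Gen.ghd e) * FreeAlgebra.ι K (Gen.edg e))
        (FreeAlgebra.ι K (Gen.vtx (G.r e)))
  | ck1_ne {e f : G.E} (h : e ≠ f) :
      LRel G K (FreeAlgebra.ι K (Gen.ghd e) * FreeAlgebra.ι K (Gen.edg f)) 0
  | ck2 (v : G.V) (hfin : {e | G.s e = v}.Finite) (hne : ∃ e, G.s e = v) :
      LRel G K (FreeAlgebra.ι K (Gen.vtx v))
        (∑ e ∈ hfin.toFinset, FreeAlgebra.ι K (Gen.edg e) * FreeAlgebra.ι K (Gen.ghd e))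

/-- The Leavitt path algebra of `G` over `K`. -/
abbrev LPA (G : DirGraph) (K : Type) [Field K] : Type := RingQuot (LRel G K)

/-- The image of a vertex in the Leavitt path algebra. -/
def ofV (G : DirGraph) (K : Type) [Field K] (v : G.V) : LPA G K :=
  RingQuot.mkAlgHom K (LRel G K) (FreeAlgebra.ι K (Gen.vtx v))

/-- The image of an edge in the Leavitt path algebra. -/
def ofE (G : DirGraph) (K : Type) [Field K] (e : G.E) : LPA G K :=
  RingQuot.mkAlgHom K (LRel G K) (FreeAlgebra.ι K (Gen.edg e))

/-- The image of a ghost edge in the Leavitt path algebra. -/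
def ofG (G : DirGraph) (K : Type) [Field K] (e : G.E) : LPA G K :=
  RingQuot.mkAlgHom K (LRel G K) (FreeAlgebra.ι K (Gen.ghd e))

/-- The element `μ` of the Leavitt path algebra associated to a finite path `μ`. -/
def pathElem (G : DirGraph) (K : Type) [Field K] (μ : G.FinPath) : LPA G K :=
  ofV G K μ.src * (μ.edges.map (ofE G K)).prod

/-- The element `μ^*` of the Leavitt path algebra associated to a finite path `μ`. -/
def pathStarElem (G : DirGraph) (K : Type) [Field K] (μ : G.FinPath) : LPA G K :=
  (μ.edges.reverse.map (ofG G K)).prod * ofV G K μ.src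

/-- The degree-`n` homogeneous component of the canonical `ℤ`-grading of the Leavitt
path algebra: the span of the monomials `μ ν^*` with `|μ| - |ν| = n`. -/
def LPAdeg (G : DirGraph) (K : Type) [Field K] (n : ℤ) : Submodule K (LPA G K) :=
  Submodule.span K {x | ∃ μ ν : G.FinPath, μ.rng = ν.rng ∧
    (μ.length : ℤ) - (ν.length : ℤ) = n ∧ x = pathElem G K μ * pathStarElem G K ν}

/-- `W` is a `ℤ`-grading making `M` a graded module over the canonically graded
Leavitt path algebra. -/
def IsModuleGrading (G : DirGraph) (K : Type) [Field K] (M : Type) [AddCommGroup M]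
    [Module K M] [Module (LPA G K) M] (W : ℤ → Submodule K M) : Prop :=
  DirectSum.IsInternal W ∧
    ∀ (m k : ℤ) (a : LPA G K) (y : M), a ∈ LPAdeg G K m → y ∈ W k → a • y ∈ W (m + k)

/-- A set is graded (with respect to a grading `W`) if each of its elements is a finite sum
of homogeneous elements of the set. -/
def GradedCarrier {K M : Type} [Field K] [AddCommGroup M] [Module K M]
    (W : ℤ → Submodule K M) (S : Set M) : Prop :=
  ∀ m ∈ S, ∃ l : List M, (∀ z ∈ l, z ∈ S ∧ ∃ k, z ∈ W k) ∧ l.sum = m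

/-- A graded isomorphism between graded modules over the Leavitt path algebra. -/
def GradedIsoLPA (G : DirGraph) (K : Type) [Field K] (M N : Type)
    [AddCommGroup M] [AddCommGroup N] [Module K M] [Module K N]
    [Module (LPA G K) M] [Module (LPA G K) N]
    (W : ℤ → Submodule K M) (W' : ℤ → Submodule K N) : Prop :=
  ∃ f : M ≃ₗ[LPA G K] N, (∀ k, ∀ m ∈ W k, f m ∈ W' k) ∧ ∀ k, ∀ n ∈ W' k, f.symm n ∈ W k

/-- A module over the Leavitt path algebra is unital if it is generated by the images of the
vertices. -/
def IsUnitalModule (G : DirGraph) (K : Type) [Field K] (M : Type) [AddCommGroup M]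
    [Module (LPA G K) M] : Prop :=
  ∀ m : M, m ∈ Submodule.span (LPA G K) {y : M | ∃ (v : G.V) (m' : M), y = ofV G K v • m'}

/-! ## Chen modules, specified by a basis and the action of the generators -/

/-- A specification of the (twisted) Chen module attached to a boundary path `x`:
an `L_K(E)`-module `M` which is a `K'`-vector space with basis the tail-equivalence class
of `x`, the generators acting by the τ-twisted shift formulas. Here `K ⊆ K'` is a field
extension and `τ : E¹ → K'` is a family of nonzero scalars. -/
structure ChenSpecT (G : DirGraph) (K K' : Type) [Field K] [Field K'] [Algebra K K']
    (τ : G.E → K') (x : G.BPath) (M : Type) [AddCommGroup M] [Module K' M]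
    [Module (LPA G K) M] : Type where
  tau_ne : ∀ e, τ e ≠ 0
  basis : Module.Basis (orbit x) K' M
  act_v : ∀ (v : G.V) (p : orbit x),
    ofV G K v • basis p = if v = BPath.src (p : G.BPath) then basis p else 0
  act_e : ∀ (e : G.E) (p q : orbit x), IsCat (singleE G e) (p : G.BPath) (q : G.BPath) →
    ofE G K e • basis p = τ e • basis q
  act_e_zero : ∀ (e : G.E) (p : orbit x),
    (¬ ∃ q : G.BPath, IsCat (singleE G e) (p : G.BPath) q) → ofE G K e • basis p = 0
  act_g : ∀ (e : G.E) (p q : orbit x), IsCat (singleE G e) (p : G.BPath) (q : G.BPath) →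
    ofG G K e • basis q = (τ e)⁻¹ • basis p
  act_g_zero : ∀ (e : G.E) (q : orbit x),
    (¬ ∃ p : G.BPath, IsCat (singleE G e) p (q : G.BPath)) → ofG G K e • basis q = 0

/-- Specification of the Chen module `V_{[x]}^a` twisted by `a : E¹ → K^*`
(`a = 1` gives `V_{[x]}`). -/
abbrev ChenSpec (G : DirGraph) (K : Type) [Field K] (a : G.E → K) (x : G.BPath) (M : Type)
    [AddCommGroup M] [Module K M] [Module (LPA G K) M] : Type :=
  ChenSpecT G K K a x M

/-- The canonical grading on a Chen module: the degree-`k` component is spanned by the basis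
elements tail-equivalent to `x` with lag `k`. -/
def chenW {G : DirGraph} {K' : Type} [Field K'] {x : G.BPath} {M : Type}
    [AddCommGroup M] [Module K' M] (b : Module.Basis (orbit x) K' M) (k : ℤ) : Submodule K' M :=
  Submodule.span K' (⇑b '' {p : orbit x | TailEqLag (p : G.BPath) x k})

/-! ## The module `K L_x` -/

/-- The set `L_x` of pairs `(y, k)` with `y ∼_k x`. -/
def Lset (G : DirGraph) (x : G.BPath) : Set (G.BPath × ℤ) := {yk | TailEqLag yk.1 x yk.2}

/-- The underlying `K`-vector space of the module `K L_x`, with basis `L_x`. -/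
abbrev KLCarrier (G : DirGraph) (K : Type) [Field K] (x : G.BPath) : Type := (Lset G x) →₀ K

/-- Specification of the `L_K(E)`-module structure on `K L_x`, given by
`(μ ν^*) ⬝ (y, k) = (μ p, |μ| - |ν| + k)` when `y = ν p`, and `0` otherwise. The module
structure is encoded as a `K`-algebra homomorphism `ρ` to the endomorphism algebra. -/
def KLSpec (G : DirGraph) (K : Type) [Field K] (x : G.BPath)
    (ρ : LPA G K →ₐ[K] Module.End K (KLCarrier G K x)) : Prop :=
  (∀ (μ ν : G.FinPath), μ.rng = ν.rng → ∀ (yk zk : Lset G x) (p : G.BPath),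
      IsCat ν p (yk : G.BPath × ℤ).1 → IsCat μ p (zk : G.BPath × ℤ).1 →
      (zk : G.BPath × ℤ).2 = (yk : G.BPath × ℤ).2 + (μ.length : ℤ) - (ν.length : ℤ) →
      ρ (pathElem G K μ * pathStarElem G K ν) (Finsupp.single yk 1) = Finsupp.single zk 1) ∧
  (∀ (μ ν : G.FinPath), μ.rng = ν.rng → ∀ yk : Lset G x,
      (¬ ∃ p : G.BPath, IsCat ν p (yk : G.BPath × ℤ).1) →
      ρ (pathElem G K μ * pathStarElem G K ν) (Finsupp.single yk 1) = 0)

/-- The canonical grading of `K L_x`: `(y, k)` is homogeneous of degree `k`. -/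
noncomputable def KLgr (G : DirGraph) (K : Type) [Field K] (x : G.BPath) (k : ℤ) :
    Submodule K (KLCarrier G K x) :=
  Submodule.span K {m | ∃ yk : Lset G x, (yk : G.BPath × ℤ).2 = k ∧ m = Finsupp.single yk 1}

end DirGraph

open DirGraph

/-!
If `[x] = [y]`, the two modules have the same basis and the same action formulas, so the
identification of the bases is a module isomorphism; it suffices to check this on the generators
`v, e, e^*`. Conversely, let `f : V_{[x]} ≅ V_{[y]}`. If `x` is infinite, `(x_1 ⋯ x_k)^* b_x ≠ 0`
for every `k`, so some path in the finite support of `f b_x` starts with `x_1 ⋯ x_k` for infinitely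
many `k`, and that path is `x`. If `x = μ` ends at the singular vertex `v`, then `b_v = μ^* b_x` is
fixed by `v` and killed by every `e^*`; so is `f b_v`, whose support can then only contain the
trivial path `v`. Either way some path of `[y]` is tail equivalent to `x`.
-/

theorem LinearMap.map_smul_of_basis {R S M N ι : Type*} [Semiring R] [Monoid S]
    [AddCommMonoid M] [Module R M] [DistribMulAction S M] [SMulCommClass S R M]
    [AddCommMonoid N] [Module R N] [DistribMulAction S N] [SMulCommClass S R N]
    (g : M →ₗ[R] N) (b : Module.Basis ι R M) (s : S) (h : ∀ i, g (s • b i) = s • g (b i))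
    (m : M) : g (s • m) = s • g m :=
  LinearMap.congr_fun (b.ext (f₁ := g ∘ₗ DistribSMul.toLinearMap R M s)
    (f₂ := DistribSMul.toLinearMap R N s ∘ₗ g) h) m

theorem LinearMap.map_smul_of_adjoin_eq_top {R A M N : Type*} [CommSemiring R] [Semiring A]
    [Algebra R A] [AddCommMonoid M] [Module R M] [Module A M] [IsScalarTower R A M]
    [AddCommMonoid N] [Module R N] [Module A N] [IsScalarTower R A N]
    (g : M →ₗ[R] N) {s : Set A} (hs : Algebra.adjoin R s = ⊤)
    (hg : ∀ a ∈ s, ∀ m, g (a • m) = a • g m) (a : A) (m : M) : g (a • m) = a • g m := by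
  have ha : a ∈ Algebra.adjoin R s := hs ▸ Algebra.mem_top
  induction ha using Algebra.adjoin_induction generalizing m with
  | mem a ha => exact hg a ha m
  | algebraMap r => rw [algebraMap_smul, map_smul, algebraMap_smul]
  | add a b _ _ iha ihb => rw [add_smul, add_smul, map_add, iha, ihb]
  | mul a b _ _ iha ihb => rw [mul_smul, mul_smul, iha, ihb]

namespace DirGraph

variable {G : DirGraph}

theorem FinPath.ext {μ ν : G.FinPath} (hsrc : μ.src = ν.src) (hedges : μ.edges = ν.edges) :
    μ = ν := by
  cases μ; cases ν; simp only at hsrc hedges; subst hsrc hedges; rfl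

theorem InfPath.ext {P Q : G.InfPath} (h : P.edges = Q.edges) : P = Q := by
  cases P; cases Q; simp only at h; subst h; rfl

theorem FinPath.rng_of_edges_eq_nil {μ : G.FinPath} (h : μ.edges = []) : μ.rng = μ.src := by
  simp [FinPath.rng, h]

theorem FinPath.rng_of_mem_getLast? {μ : G.FinPath} {e : G.E} (h : e ∈ μ.edges.getLast?) :
    μ.rng = G.r e := by
  simp_all [FinPath.rng]

theorem FinPath.rng_singleE (e : G.E) : (singleE G e).rng = G.r e := rfl

theorem FinPath.src_eq_of_edges_eq_cons {μ : G.FinPath} {e : G.E} {t : List G.E}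
    (h : μ.edges = e :: t) : μ.src = G.s e :=
  (μ.src_eq e (by simp [h])).symm

theorem FinPath.rng_eq_of_edges_eq_append {μ ρ σ : G.FinPath}
    (h : μ.edges = ρ.edges ++ σ.edges) (hsrc : μ.src = ρ.src) (hrng : ρ.rng = σ.src) :
    μ.rng = σ.rng := by
  unfold FinPath.rng at hrng ⊢
  rw [h, List.getLast?_append, hsrc, ← hrng]
  cases σ.edges.getLast? <;> rfl

theorem FinPath.exists_split (μ : G.FinPath) {l₁ l₂ : List G.E} (h : μ.edges = l₁ ++ l₂) :
    ∃ ρ σ : G.FinPath, ρ.src = μ.src ∧ ρ.edges = l₁ ∧ σ.edges = l₂ ∧ ρ.rng = σ.src ∧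
      σ.rng = μ.rng := by
  have hchain := List.isChain_append.mp (h ▸ μ.chain)
  let ρ : G.FinPath :=
    ⟨μ.src, l₁, fun e he => μ.src_eq e (by simp [h, Option.mem_def.mp he]), hchain.1⟩
  have hσ : ∀ e ∈ l₂.head?, G.s e = ρ.rng := by
    intro e he
    cases hl : l₁.getLast? with
    | none =>
      rw [List.getLast?_eq_none_iff] at hl
      subst hl
      exact μ.src_eq e (by simpa [h] using he)
    | some f =>
      rw [FinPath.rng_of_mem_getLast? (e := f) hl]
      exact (hchain.2.2 f hl e he).symm
  let σ : G.FinPath := ⟨ρ.rng, l₂, hσ, hchain.2.1⟩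
  exact ⟨ρ, σ, rfl, rfl, rfl, rfl,
    (FinPath.rng_eq_of_edges_eq_append (ρ := ρ) (σ := σ) h rfl rfl).symm⟩

theorem FinPath.exists_append (ρ σ : G.FinPath) (h : ρ.rng = σ.src) :
    ∃ μ : G.FinPath, μ.src = ρ.src ∧ μ.edges = ρ.edges ++ σ.edges ∧ μ.rng = σ.rng := by
  have hchain : (ρ.edges ++ σ.edges).IsChain (fun e f => G.r e = G.s f) := by
    refine List.isChain_append.mpr ⟨ρ.chain, σ.chain, fun a ha b hb => ?_⟩
    rw [← FinPath.rng_of_mem_getLast? ha, h, σ.src_eq b hb]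
  have hsrc : ∀ e ∈ (ρ.edges ++ σ.edges).head?, G.s e = ρ.src := by
    intro e he
    cases hρ : ρ.edges with
    | nil => rw [hρ, List.nil_append] at he; rw [σ.src_eq e he, ← h, FinPath.rng_of_edges_eq_nil hρ]
    | cons f t => exact ρ.src_eq e (by simpa [hρ] using he)
  exact ⟨⟨ρ.src, _, hsrc, hchain⟩, rfl, rfl, FinPath.rng_eq_of_edges_eq_append rfl rfl h⟩

theorem isCat_inl_inl_iff {μ ρ ξ : G.FinPath} {hp hq} :
    IsCat μ (⟨Sum.inl ρ, hp⟩ : G.BPath) ⟨Sum.inl ξ, hq⟩ ↔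
      μ.rng = ρ.src ∧ ξ.src = μ.src ∧ ξ.edges = μ.edges ++ ρ.edges := Iff.rfl

theorem isCat_inr_inr_iff {μ : G.FinPath} {P Q : G.InfPath} {hp hq} :
    IsCat μ (⟨Sum.inr P, hp⟩ : G.BPath) ⟨Sum.inr Q, hq⟩ ↔
      μ.rng = P.src ∧
      (∀ i (h : i < μ.edges.length), Q.edges i = μ.edges.get ⟨i, h⟩) ∧
      (∀ i, Q.edges (μ.edges.length + i) = P.edges i) := Iff.rfl

theorem not_isCat_inl_inr {μ ρ : G.FinPath} {Q : G.InfPath} {hp hq} :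
    ¬ IsCat μ (⟨Sum.inl ρ, hp⟩ : G.BPath) ⟨Sum.inr Q, hq⟩ := fun h => h.2

theorem not_isCat_inr_inl {μ ξ : G.FinPath} {P : G.InfPath} {hp hq} :
    ¬ IsCat μ (⟨Sum.inr P, hp⟩ : G.BPath) ⟨Sum.inl ξ, hq⟩ := fun h => h.2

theorem IsCat.src_eq {μ : G.FinPath} {p q : G.BPath} (h : IsCat μ p q) : q.src = μ.src := by
  obtain ⟨pv | P, hps⟩ := p <;> obtain ⟨qv | Q, hqs⟩ := q
  · exact (isCat_inl_inl_iff.mp h).2.1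
  · exact absurd h not_isCat_inl_inr
  · exact absurd h not_isCat_inr_inl
  obtain ⟨h1, h2, h3⟩ := isCat_inr_inr_iff.mp h
  show G.s (Q.edges 0) = μ.src
  cases hμ : μ.edges with
  | nil =>
    rw [show Q.edges 0 = P.edges 0 by simpa [hμ] using h3 0, ← FinPath.rng_of_edges_eq_nil hμ, h1]
    rfl
  | cons e t => rw [FinPath.src_eq_of_edges_eq_cons hμ, h2 0 (by simp [hμ])]; simp [hμ]

theorem IsCat.eq_of_edges_eq_nil {μ : G.FinPath} {p q : G.BPath} (h : IsCat μ p q)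
    (hμ : μ.edges = []) : p = q := by
  obtain ⟨ρ | P, hps⟩ := p <;> obtain ⟨ξ | Q, hqs⟩ := q
  · obtain ⟨h1, h2, h3⟩ := isCat_inl_inl_iff.mp h
    refine Subtype.ext (congrArg Sum.inl (FinPath.ext ?_ ?_))
    · rw [h2, ← h1, FinPath.rng_of_edges_eq_nil hμ]
    · rw [h3, hμ, List.nil_append]
  · exact absurd h not_isCat_inl_inr
  · exact absurd h not_isCat_inr_inl
  · refine Subtype.ext (congrArg Sum.inr (InfPath.ext (funext fun i => ?_)))
    simpa [hμ] using ((isCat_inr_inr_iff.mp h).2.2 i).symm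

theorem isCat_vertexPath (p : G.BPath) : IsCat (vertexPath G p.src) p p := by
  obtain ⟨ρ | P, hps⟩ := p
  · exact isCat_inl_inl_iff.mpr ⟨rfl, rfl, rfl⟩
  · exact isCat_inr_inr_iff.mpr
      ⟨rfl, fun i h => by simp [vertexPath] at h, fun i => by simp [vertexPath]⟩

theorem IsCat.unique {μ : G.FinPath} {p q₁ q₂ : G.BPath} (h₁ : IsCat μ p q₁)
    (h₂ : IsCat μ p q₂) : q₁ = q₂ := by
  obtain ⟨ρ | P, hps⟩ := p <;> obtain ⟨ξ₁ | Q₁, h₁s⟩ := q₁ <;> obtain ⟨ξ₂ | Q₂, h₂s⟩ := q₂ <;>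
    first
    | exact absurd h₁ not_isCat_inl_inr | exact absurd h₁ not_isCat_inr_inl
    | exact absurd h₂ not_isCat_inl_inr | exact absurd h₂ not_isCat_inr_inl | skip
  · obtain ⟨-, h1b, h1c⟩ := isCat_inl_inl_iff.mp h₁
    obtain ⟨-, h2b, h2c⟩ := isCat_inl_inl_iff.mp h₂
    exact Subtype.ext (congrArg Sum.inl (FinPath.ext (h1b.trans h2b.symm) (h1c.trans h2c.symm)))
  · obtain ⟨-, h1b, h1c⟩ := isCat_inr_inr_iff.mp h₁
    obtain ⟨-, h2b, h2c⟩ := isCat_inr_inr_iff.mp h₂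
    refine Subtype.ext (congrArg Sum.inr (InfPath.ext (funext fun i => ?_)))
    rcases Nat.lt_or_ge i μ.edges.length with hlt | hge
    · rw [h1b i hlt, h2b i hlt]
    · obtain ⟨j, rfl⟩ := Nat.exists_eq_add_of_le hge
      rw [h1c j, h2c j]

theorem IsCat.append {μ ν : G.FinPath} {p q' q : G.BPath} (h₁ : IsCat μ q' q)
    (h₂ : IsCat ν p q') :
    ∃ ρ : G.FinPath, ρ.src = μ.src ∧ ρ.edges = μ.edges ++ ν.edges ∧ IsCat ρ p q := by
  obtain ⟨⟨src, edges, hs, hc⟩, hsrc, hedges, hrng⟩ :=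
    FinPath.exists_append μ ν (h₁.1.trans h₂.src_eq)
  dsimp only at hsrc hedges
  subst hsrc hedges
  refine ⟨⟨μ.src, μ.edges ++ ν.edges, hs, hc⟩, rfl, rfl, hrng.trans h₂.1, ?_⟩
  obtain ⟨ρ | P, hps⟩ := p <;> obtain ⟨ξ' | Q', hq's⟩ := q' <;> obtain ⟨ξ | Q, hqs⟩ := q <;>
    first
    | exact absurd h₁ not_isCat_inl_inr | exact absurd h₁ not_isCat_inr_inl
    | exact absurd h₂ not_isCat_inl_inr | exact absurd h₂ not_isCat_inr_inl | skip
  · obtain ⟨-, h1b, h1c⟩ := isCat_inl_inl_iff.mp h₁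
    obtain ⟨-, -, h2c⟩ := isCat_inl_inl_iff.mp h₂
    exact ⟨h1b, by rw [h1c, h2c, List.append_assoc]⟩
  · obtain ⟨-, h1b, h1c⟩ := isCat_inr_inr_iff.mp h₁
    obtain ⟨-, h2b, h2c⟩ := isCat_inr_inr_iff.mp h₂
    refine ⟨fun i hi => ?_, fun i => ?_⟩
    · simp only [List.get_eq_getElem] at h1b h2b ⊢
      rcases Nat.lt_or_ge i μ.edges.length with hlt | hge
      · rw [List.getElem_append_left hlt, h1b i hlt]
      · obtain ⟨j, rfl⟩ := Nat.exists_eq_add_of_le hge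
        simp only [List.length_append] at hi
        rw [List.getElem_append_right (by omega), h1c j, h2b j (by omega)]
        simp
    · rw [List.length_append, Nat.add_assoc, h1c, h2c]

theorem exists_isCat_singleE_of_inl {q : G.BPath} {ξ : G.FinPath} {e : G.E} {t : List G.E}
    (hq : q.1 = Sum.inl ξ) (hξ : ξ.edges = e :: t) : ∃ p, IsCat (singleE G e) p q := by
  obtain ⟨ρ, σ, -, hρe, hσe, hρσ, hσr⟩ := ξ.exists_split (l₁ := [e]) (l₂ := t) hξ
  obtain ⟨qv, hqs⟩ := q
  dsimp only at hq
  subst hq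
  refine ⟨⟨Sum.inl σ, fun μ hμ => ?_⟩, isCat_inl_inl_iff.mpr ⟨?_, ?_, ?_⟩⟩
  · cases hμ
    rw [hσr]
    exact hqs ξ rfl
  · rw [FinPath.rng_singleE, ← hρσ, FinPath.rng_of_mem_getLast? (e := e) (by simp [hρe])]
  · exact FinPath.src_eq_of_edges_eq_cons hξ
  · rw [hξ, hσe]
    rfl

theorem exists_isCat_singleE_of_inr {q : G.BPath} {Q : G.InfPath} (hq : q.1 = Sum.inr Q) :
    ∃ p, IsCat (singleE G (Q.edges 0)) p q := by
  obtain ⟨qv, hqs⟩ := q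
  dsimp only at hq
  subst hq
  refine ⟨⟨Sum.inr ⟨fun i => Q.edges (i + 1), fun n => Q.chain (n + 1)⟩, by simp⟩,
    isCat_inr_inr_iff.mpr ⟨Q.chain 0, fun i hi => ?_, fun i => by rw [Nat.add_comm]; rfl⟩⟩
  obtain rfl : i = 0 := by simpa [singleE] using hi
  rfl

theorem IsCat.exists_singleE {μ : G.FinPath} {p q : G.BPath} {e : G.E} {t : List G.E}
    (h : IsCat μ p q) (hμ : μ.edges = e :: t) : ∃ q', IsCat (singleE G e) q' q := by
  obtain ⟨ρ | P, hps⟩ := p <;> obtain ⟨ξ | Q, hqs⟩ := q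
  · exact exists_isCat_singleE_of_inl rfl (by rw [(isCat_inl_inl_iff.mp h).2.2, hμ]; rfl)
  · exact absurd h not_isCat_inl_inr
  · exact absurd h not_isCat_inr_inl
  · have he : Q.edges 0 = e := by simpa [hμ] using (isCat_inr_inr_iff.mp h).2.1 0 (by simp [hμ])
    exact he ▸ exists_isCat_singleE_of_inr rfl

theorem IsCat.exists_of_length_le {ν ν' : G.FinPath} {p p' y : G.BPath}
    (h : IsCat ν p y) (h' : IsCat ν' p' y) (hle : ν.edges.length ≤ ν'.edges.length) :
    ∃ ρ : G.FinPath, IsCat ρ p' p ∧ ν'.edges = ν.edges ++ ρ.edges := by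
  obtain ⟨ν₁, ρ, hs₁, he₁, heρ, hrng₁, hrngρ⟩ :=
    ν'.exists_split (List.take_append_drop ν.edges.length ν'.edges).symm
  have hν₁ (hpre : ν'.edges.take ν.edges.length = ν.edges) : ν₁ = ν :=
    FinPath.ext (hs₁.trans (h'.src_eq.symm.trans h.src_eq)) (he₁.trans hpre)
  have hedges : ν'.edges = ν₁.edges ++ ρ.edges := by rw [he₁, heρ, List.take_append_drop]
  obtain ⟨ρp | P, hps⟩ := p <;> obtain ⟨ρp' | P', hp's⟩ := p' <;> obtain ⟨ξ | Q, hys⟩ := y <;>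
    first
    | exact absurd h not_isCat_inl_inr | exact absurd h not_isCat_inr_inl
    | exact absurd h' not_isCat_inl_inr | exact absurd h' not_isCat_inr_inl | skip
  · obtain ⟨ha, -, hc⟩ := isCat_inl_inl_iff.mp h
    obtain ⟨ha', -, hc'⟩ := isCat_inl_inl_iff.mp h'
    obtain rfl := hν₁ <| by
      have := congrArg (List.take ν.edges.length) (hc.symm.trans hc')
      rwa [List.take_left, List.take_append_of_le_length hle, eq_comm] at this
    refine ⟨ρ, isCat_inl_inl_iff.mpr ⟨hrngρ.trans ha', ha.symm.trans hrng₁, ?_⟩, hedges⟩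
    exact List.append_cancel_left (hc.symm.trans (hc'.trans (by rw [hedges, List.append_assoc])))
  · obtain ⟨-, hb, hc⟩ := isCat_inr_inr_iff.mp h
    obtain ⟨ha', hb', hc'⟩ := isCat_inr_inr_iff.mp h'
    simp only [List.get_eq_getElem] at hb hb'
    obtain rfl := hν₁ <| List.ext_getElem (by simpa using hle) fun i h₁ h₂ => by
      rw [List.getElem_take, ← hb' i (by omega), hb i h₂]
    refine ⟨ρ, isCat_inr_inr_iff.mpr ⟨hrngρ.trans ha', fun i hi => ?_, fun i => ?_⟩, hedges⟩
    · have hi' : ν₁.edges.length + i < ν'.edges.length := by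
        rw [hedges, List.length_append]; omega
      rw [← hc i, hb' _ hi']
      simp [hedges]
    · rw [← hc, ← hc']
      congr 1
      rw [hedges, List.length_append, Nat.add_assoc]

theorem IsCat.tailEq {μ : G.FinPath} {p q : G.BPath} (h : IsCat μ p q) : TailEq q p :=
  ⟨μ.length, μ, vertexPath G p.src, p, h, isCat_vertexPath p, by simp [vertexPath, FinPath.length]⟩

theorem TailEq.refl (x : G.BPath) : TailEq x x := (isCat_vertexPath x).tailEq

theorem TailEq.symm {x y : G.BPath} (h : TailEq x y) : TailEq y x := by
  obtain ⟨k, μ, ν, p, hμ, hν, hk⟩ := h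
  exact ⟨-k, ν, μ, p, hν, hμ, by omega⟩

theorem TailEq.trans {x y z : G.BPath} (hxy : TailEq x y) (hyz : TailEq y z) : TailEq x z := by
  obtain ⟨-, μ, ν, p, h₁, h₂, -⟩ := hxy
  obtain ⟨-, μ', ν', p', h₃, h₄, -⟩ := hyz
  rcases le_total ν.edges.length μ'.edges.length with hle | hle
  · obtain ⟨ρ, hρ, -⟩ := h₂.exists_of_length_le h₃ hle
    obtain ⟨σ, -, -, hσ⟩ := h₁.append hρ
    exact ⟨_, σ, ν', p', hσ, h₄, rfl⟩
  · obtain ⟨ρ, hρ, -⟩ := h₃.exists_of_length_le h₂ hle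
    obtain ⟨σ, -, -, hσ⟩ := h₄.append hρ
    exact ⟨_, μ, σ, p, h₁, hσ, rfl⟩

theorem orbit_eq_of_tailEq {x y : G.BPath} (h : TailEq x y) : orbit x = orbit y :=
  Set.ext fun _ => ⟨fun hz => hz.trans h, fun hz => hz.trans h.symm⟩

theorem IsCat.tail_mem_orbit {μ : G.FinPath} {p q x : G.BPath} (h : IsCat μ p q)
    (hq : q ∈ orbit x) : p ∈ orbit x :=
  h.tailEq.symm.trans hq

theorem IsCat.mem_orbit_of_tail {μ : G.FinPath} {p q x : G.BPath} (h : IsCat μ p q)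
    (hp : p ∈ orbit x) : q ∈ orbit x :=
  h.tailEq.trans hp

theorem IsCat.uncons {μ : G.FinPath} {p q : G.BPath} {e : G.E} {t : List G.E}
    (h : IsCat μ p q) (hμ : μ.edges = e :: t) :
    ∃ (q' : G.BPath) (ρ : G.FinPath), IsCat (singleE G e) q' q ∧ IsCat ρ p q' ∧ ρ.edges = t := by
  obtain ⟨q', hq'⟩ := h.exists_singleE hμ
  obtain ⟨ρ, hρ, hedges⟩ := hq'.exists_of_length_le h (by simp [hμ, singleE])
  exact ⟨q', ρ, hq', hρ, by simpa [hμ, singleE] using hedges.symm⟩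

theorem IsCat.cons {μ ρ : G.FinPath} {p q q' : G.BPath} {e : G.E}
    (h₁ : IsCat (singleE G e) q' q) (h₂ : IsCat ρ p q') (hμ : μ.edges = e :: ρ.edges) :
    IsCat μ p q := by
  obtain ⟨σ, hσs, hσe, hσ⟩ := h₁.append h₂
  rwa [FinPath.ext (μ := μ) (ν := σ) (FinPath.src_eq_of_edges_eq_cons hμ ▸ hσs.symm)
    (hμ.trans hσe.symm)]

theorem eq_inl_vertexPath_of_forall_not_isCat {q : G.BPath}
    (h : ∀ e p, ¬ IsCat (singleE G e) p q) : q.1 = Sum.inl (vertexPath G q.src) := by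
  rcases hq : q.1 with ξ | Q
  · cases hξ : ξ.edges with
    | nil =>
      obtain ⟨qv, hqs⟩ := q
      dsimp only at hq
      subst hq
      exact congrArg Sum.inl (FinPath.ext rfl hξ)
    | cons e t =>
      obtain ⟨p, hp⟩ := exists_isCat_singleE_of_inl hq hξ
      exact (h e p hp).elim
  · obtain ⟨p, hp⟩ := exists_isCat_singleE_of_inr hq
    exact (h _ p hp).elim

theorem isCat_of_eq_inl {μ : G.FinPath} {q x : G.BPath} (hx : x.1 = Sum.inl μ)
    (hq : q.1 = Sum.inl (vertexPath G μ.rng)) : IsCat μ q x := by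
  obtain ⟨xv, hxs⟩ := x
  obtain ⟨qv, hqs⟩ := q
  dsimp only at hx hq
  subst hx hq
  exact isCat_inl_inl_iff.mpr ⟨rfl, rfl, by rw [vertexPath, List.append_nil]⟩

theorem IsCat.edges_eq_nil_of_vertexBPath {μ : G.FinPath} {p : G.BPath} {v : G.V}
    {hv : IsSingular G v} (h : IsCat μ p (vertexBPath G v hv)) : μ.edges = [] := by
  obtain ⟨ρ | P, hps⟩ := p
  · exact (List.append_eq_nil_iff.mp (isCat_inl_inl_iff.mp h).2.2.symm).1
  · exact absurd h not_isCat_inr_inl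

theorem eq_of_tailEq_vertexBPath {u w : G.V} {hu : IsSingular G u} {hw : IsSingular G w}
    (h : TailEq (vertexBPath G u hu) (vertexBPath G w hw)) : u = w := by
  obtain ⟨-, μ, ν, p, hμ, hν, -⟩ := h
  have hpu := hμ.eq_of_edges_eq_nil hμ.edges_eq_nil_of_vertexBPath
  have hpw := hν.eq_of_edges_eq_nil hν.edges_eq_nil_of_vertexBPath
  exact congrArg BPath.src (hpu.symm.trans hpw)

def prefixPath (P : G.InfPath) (n : ℕ) : G.FinPath where
  src := P.src
  edges := List.ofFn fun i : Fin n => P.edges i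
  src_eq := by
    intro e he
    cases n with
    | zero => simp at he
    | succ k =>
      rw [List.ofFn_succ] at he
      simp only [List.head?_cons, Option.mem_def, Option.some.injEq] at he
      subst he
      rfl
  chain := List.isChain_iff_getElem.mpr fun i hi => by simpa using P.chain i

theorem prefixPath_length (P : G.InfPath) (n : ℕ) : (prefixPath P n).edges.length = n := by
  simp [prefixPath]

theorem exists_isCat_prefixPath {P : G.InfPath} {x : G.BPath} (hx : x.1 = Sum.inr P) (n : ℕ) :
    ∃ p, IsCat (prefixPath P n) p x := by
  obtain ⟨xv, hxs⟩ := x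
  dsimp only at hx
  subst hx
  let tail : G.InfPath :=
    ⟨fun i => P.edges (n + i), fun i => by simpa [Nat.add_assoc] using P.chain (n + i)⟩
  refine ⟨⟨Sum.inr tail, by simp⟩, isCat_inr_inr_iff.mpr
    ⟨?_, fun i hi => by simp [prefixPath], fun i => by rw [prefixPath_length]⟩⟩
  cases n with
  | zero => exact FinPath.rng_of_edges_eq_nil (by simp [prefixPath])
  | succ k =>
    rw [FinPath.rng_of_mem_getLast? (e := P.edges k)
      (by dsimp only [prefixPath]; rw [List.ofFn_succ']; simp)]
    exact P.chain k

theorem eq_of_frequently_isCat_prefixPath {P : G.InfPath} {x q : G.BPath}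
    (hx : x.1 = Sum.inr P) (hq : ∃ᶠ n in Filter.atTop, ∃ p, IsCat (prefixPath P n) p q) :
    q = x := by
  rw [Filter.frequently_atTop] at hq
  obtain ⟨ξ | Q, hqs⟩ := q
  · obtain ⟨n, hn, ⟨ρ | R, hps⟩, hp⟩ := hq (ξ.edges.length + 1)
    · have := congrArg List.length (isCat_inl_inl_iff.mp hp).2.2
      simp only [List.length_append, prefixPath_length] at this
      omega
    · exact absurd hp not_isCat_inr_inl
  · refine Subtype.ext (hx ▸ congrArg Sum.inr (InfPath.ext (funext fun i => ?_)))
    obtain ⟨n, hn, ⟨ρ | R, hps⟩, hp⟩ := hq (i + 1)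
    · exact absurd hp not_isCat_inl_inr
    · rw [(isCat_inr_inr_iff.mp hp).2.1 i (by rw [prefixPath_length]; omega)]
      simp [prefixPath]

def lpaGenerators (G : DirGraph) (K : Type) [Field K] : Set (LPA G K) :=
  Set.range (ofV G K) ∪ Set.range (ofE G K) ∪ Set.range (ofG G K)

theorem adjoin_lpaGenerators (G : DirGraph) (K : Type) [Field K] :
    Algebra.adjoin K (lpaGenerators G K) = ⊤ := by
  rw [eq_top_iff]
  rintro a -
  obtain ⟨b, rfl⟩ := RingQuot.mkAlgHom_surjective K (LRel G K) a
  induction b using FreeAlgebra.induction with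
  | grade0 r =>
    rw [AlgHom.commutes]
    exact Subalgebra.algebraMap_mem _ r
  | grade1 g =>
    apply Algebra.subset_adjoin
    cases g with
    | vtx v => exact Or.inl (Or.inl ⟨v, rfl⟩)
    | edg e => exact Or.inl (Or.inr ⟨e, rfl⟩)
    | ghd e => exact Or.inr ⟨e, rfl⟩
  | mul a b ha hb => rw [map_mul]; exact mul_mem ha hb
  | add a b ha hb => rw [map_add]; exact add_mem ha hb

def ghostProd (G : DirGraph) (K : Type) [Field K] (l : List G.E) : LPA G K :=
  (l.reverse.map (ofG G K)).prod

theorem ghostProd_cons (K : Type) [Field K] (e : G.E) (t : List G.E) :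
    ghostProd G K (e :: t) = ghostProd G K t * ofG G K e := by
  simp [ghostProd]

theorem pathStarElem_eq_ghostProd_mul (K : Type) [Field K] (μ : G.FinPath) :
    pathStarElem G K μ = ghostProd G K μ.edges * ofV G K μ.src := rfl

namespace ChenSpec

variable {K : Type} [Field K] {x : G.BPath} {M : Type} [AddCommGroup M] [Module K M]
  [Module (LPA G K) M] (sp : ChenSpec G K (fun _ => 1) x M)

theorem ofG_smul_basis {e : G.E} {p q : orbit x} (h : IsCat (singleE G e) p q) :
    ofG G K e • sp.basis q = sp.basis p := by
  simpa using sp.act_g e p q h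

theorem ghostProd_smul_basis {μ : G.FinPath} {p : G.BPath} {q : orbit x} (h : IsCat μ p q) :
    ghostProd G K μ.edges • sp.basis q = sp.basis ⟨p, h.tail_mem_orbit q.2⟩ := by
  generalize hl : μ.edges = l
  induction l generalizing μ q with
  | nil =>
    obtain rfl := h.eq_of_edges_eq_nil hl
    simp [ghostProd]
  | cons e t ih =>
    obtain ⟨q', ρ, hq', hρ, rfl⟩ := h.uncons hl
    rw [ghostProd_cons, mul_smul, sp.ofG_smul_basis (p := ⟨q', hq'.tail_mem_orbit q.2⟩) hq',
      ih hρ rfl]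

theorem ghostProd_smul_basis_eq_zero {μ : G.FinPath} {q : orbit x}
    (hsrc : μ.src = (q : G.BPath).src) (h : ¬ ∃ p, IsCat μ p q) :
    ghostProd G K μ.edges • sp.basis q = 0 := by
  generalize hl : μ.edges = l
  induction l generalizing μ q with
  | nil =>
    refine (h ⟨q, ?_⟩).elim
    rw [FinPath.ext (ν := vertexPath G (q : G.BPath).src) hsrc hl]
    exact isCat_vertexPath _
  | cons e t ih =>
    rw [ghostProd_cons, mul_smul]
    by_cases hq : ∃ q', IsCat (singleE G e) q' q
    · obtain ⟨q', hq'⟩ := hq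
      obtain ⟨ρ, σ, -, hρe, hσe, hρσ, -⟩ := μ.exists_split (l₁ := [e]) (l₂ := t) hl
      have hσs : σ.src = q'.src :=
        hρσ.symm.trans ((FinPath.rng_of_mem_getLast? (e := e) (by simp [hρe])).trans hq'.1)
      rw [sp.ofG_smul_basis (p := ⟨q', hq'.tail_mem_orbit q.2⟩) hq']
      exact ih hσs (fun ⟨p, hp⟩ => h ⟨p, hq'.cons hp (hl.trans (hσe ▸ rfl))⟩) hσe
    · rw [sp.act_g_zero e q hq, smul_zero]

theorem pathStarElem_smul_basis {μ : G.FinPath} {p : G.BPath} {q : orbit x} (h : IsCat μ p q) :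
    pathStarElem G K μ • sp.basis q = sp.basis ⟨p, h.tail_mem_orbit q.2⟩ := by
  rw [pathStarElem_eq_ghostProd_mul, mul_smul, sp.act_v, if_pos h.src_eq.symm,
    sp.ghostProd_smul_basis h]

theorem pathStarElem_smul_basis_eq_zero {μ : G.FinPath} {q : orbit x}
    (h : ¬ ∃ p, IsCat μ p q) : pathStarElem G K μ • sp.basis q = 0 := by
  rw [pathStarElem_eq_ghostProd_mul, mul_smul, sp.act_v]
  split_ifs with hsrc
  · exact sp.ghostProd_smul_basis_eq_zero hsrc h
  · exact smul_zero _

theorem exists_isCat_of_pathStarElem_smul_ne_zero [IsScalarTower K (LPA G K) M]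
    {μ : G.FinPath} {m : M} (h : pathStarElem G K μ • m ≠ 0) :
    ∃ q ∈ (sp.basis.repr m).support, ∃ p, IsCat μ p q := by
  contrapose! h
  rw [← sp.basis.linearCombination_repr m, Finsupp.linearCombination_apply, Finsupp.sum,
    Finset.smul_sum]
  refine Finset.sum_eq_zero fun q hq => ?_
  rw [smul_comm, sp.pathStarElem_smul_basis_eq_zero (not_exists.mpr (h q hq)), smul_zero]

theorem repr_ofG_smul [IsScalarTower K (LPA G K) M] {e : G.E} {p q : orbit x}
    (h : IsCat (singleE G e) p q) (m : M) :
    sp.basis.repr (ofG G K e • m) p = sp.basis.repr m q := by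
  suffices Finsupp.lapply p ∘ₗ sp.basis.repr.toLinearMap ∘ₗ DistribSMul.toLinearMap K M (ofG G K e)
      = Finsupp.lapply q ∘ₗ sp.basis.repr.toLinearMap from LinearMap.congr_fun this m
  refine sp.basis.ext fun q' => ?_
  simp only [LinearMap.comp_apply, DistribSMul.toLinearMap_apply, LinearEquiv.coe_coe,
    Finsupp.lapply_apply, Module.Basis.repr_self]
  by_cases hqq : q' = q
  · subst hqq
    rw [sp.ofG_smul_basis h, sp.basis.repr_self, Finsupp.single_eq_same, Finsupp.single_eq_same]
  rw [Finsupp.single_eq_of_ne' hqq]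
  by_cases hq' : ∃ p', IsCat (singleE G e) p' q'
  · obtain ⟨p', hp'⟩ := hq'
    rw [sp.ofG_smul_basis (p := ⟨p', hp'.tail_mem_orbit q'.2⟩) hp', sp.basis.repr_self,
      Finsupp.single_eq_of_ne']
    rintro rfl
    exact hqq (Subtype.ext (hp'.unique h))
  · rw [sp.act_g_zero e q' hq', map_zero, Finsupp.coe_zero, Pi.zero_apply]

theorem repr_ofV_smul_of_ne [IsScalarTower K (LPA G K) M] {v : G.V} {q : orbit x}
    (hv : v ≠ (q : G.BPath).src) (m : M) : sp.basis.repr (ofV G K v • m) q = 0 := by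
  suffices Finsupp.lapply q ∘ₗ sp.basis.repr.toLinearMap ∘ₗ DistribSMul.toLinearMap K M (ofV G K v)
      = 0 from LinearMap.congr_fun this m
  refine sp.basis.ext fun q' => ?_
  simp only [LinearMap.comp_apply, DistribSMul.toLinearMap_apply, LinearEquiv.coe_coe,
    Finsupp.lapply_apply, LinearMap.zero_apply, sp.act_v]
  split_ifs with hsrc
  · rw [sp.basis.repr_self, Finsupp.single_eq_of_ne']
    rintro rfl
    exact hv hsrc
  · rw [map_zero, Finsupp.coe_zero, Pi.zero_apply]

theorem eq_inl_vertexPath_of_mem_support [IsScalarTower K (LPA G K) M] {v : G.V} {m : M}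
    (hv : ofV G K v • m = m) (he : ∀ e, ofG G K e • m = 0) {q : orbit x}
    (hq : q ∈ (sp.basis.repr m).support) : (q : G.BPath).1 = Sum.inl (vertexPath G v) := by
  rw [Finsupp.mem_support_iff] at hq
  have hsrc : (q : G.BPath).src = v := by
    by_contra hne
    rw [← hv, sp.repr_ofV_smul_of_ne (Ne.symm hne)] at hq
    exact hq rfl
  rw [← hsrc]
  refine eq_inl_vertexPath_of_forall_not_isCat fun e p hp => hq ?_
  rw [← sp.repr_ofG_smul (p := ⟨p, hp.tail_mem_orbit q.2⟩) hp, he, map_zero, Finsupp.coe_zero,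
    Pi.zero_apply]

end ChenSpec

section Isomorphism

variable {K : Type} [Field K] {x y : G.BPath} {M N : Type}
  [AddCommGroup M] [Module K M] [Module (LPA G K) M]
  [AddCommGroup N] [Module K N] [Module (LPA G K) N]

theorem tailEq_of_linearEquiv_of_inr [IsScalarTower K (LPA G K) N]
    (spM : ChenSpec G K (fun _ => 1) x M) (spN : ChenSpec G K (fun _ => 1) y N)
    (f : M ≃ₗ[LPA G K] N)
    {P : G.InfPath} (hx : x.1 = Sum.inr P) : TailEq x y := by
  set n := f (spM.basis ⟨x, TailEq.refl x⟩)
  have hprefix : ∀ k, ∃ q ∈ (spN.basis.repr n).support, ∃ p, IsCat (prefixPath P k) p q := by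
    intro k
    obtain ⟨p, hp⟩ := exists_isCat_prefixPath hx k
    refine spN.exists_isCat_of_pathStarElem_smul_ne_zero ?_
    rw [← map_smul, spM.pathStarElem_smul_basis (q := ⟨x, TailEq.refl x⟩) hp]
    exact f.map_ne_zero_iff.mpr (spM.basis.ne_zero _)
  obtain ⟨q, -, hq⟩ :=
    (Finset.frequently_exists _).mp (Filter.Frequently.of_forall (f := Filter.atTop) hprefix)
  rw [← eq_of_frequently_isCat_prefixPath hx hq]
  exact q.2

theorem tailEq_of_linearEquiv_of_inl [IsScalarTower K (LPA G K) N]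
    (spM : ChenSpec G K (fun _ => 1) x M) (spN : ChenSpec G K (fun _ => 1) y N)
    (f : M ≃ₗ[LPA G K] N)
    {μ : G.FinPath} (hx : x.1 = Sum.inl μ) : TailEq x y := by
  have hsing : IsSingular G μ.rng := x.2 μ hx
  have hw : IsCat μ (vertexBPath G μ.rng hsing) x := isCat_of_eq_inl hx rfl
  set n := f (spM.basis ⟨_, hw.tail_mem_orbit (TailEq.refl x)⟩)
  have hv : ofV G K μ.rng • n = n := by
    rw [← map_smul, spM.act_v]
    exact congrArg f (if_pos rfl)
  have he (e : G.E) : ofG G K e • n = 0 := by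
    rw [← map_smul, spM.act_g_zero e _ fun ⟨p, hp⟩ => by
      simpa [singleE] using hp.edges_eq_nil_of_vertexBPath (hv := hsing), map_zero]
  obtain ⟨q, hq⟩ : (spN.basis.repr n).support.Nonempty := by
    rw [Finsupp.support_nonempty_iff, ne_eq, LinearEquiv.map_eq_zero_iff,
      LinearEquiv.map_eq_zero_iff]
    exact spM.basis.ne_zero _
  exact (isCat_of_eq_inl hx (spN.eq_inl_vertexPath_of_mem_support hv he hq)).tailEq.trans q.2

theorem tailEq_of_linearEquiv [IsScalarTower K (LPA G K) N]
    (spM : ChenSpec G K (fun _ => 1) x M) (spN : ChenSpec G K (fun _ => 1) y N)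
    (f : M ≃ₗ[LPA G K] N) :
    TailEq x y := by
  rcases hx : x.1 with μ | P
  · exact tailEq_of_linearEquiv_of_inl spM spN f hx
  · exact tailEq_of_linearEquiv_of_inr spM spN f hx

theorem basis_equiv_smul_of_mem_lpaGenerators (spM : ChenSpec G K (fun _ => 1) x M)
    (spN : ChenSpec G K (fun _ => 1) y N) (horb : orbit x = orbit y) {a : LPA G K}
    (ha : a ∈ lpaGenerators G K) (i : orbit x) :
    spM.basis.equiv spN.basis (Equiv.setCongr horb) (a • spM.basis i) =
      a • spM.basis.equiv spN.basis (Equiv.setCongr horb) (spM.basis i) := by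
  have hbasis (j : orbit x) : spM.basis.equiv spN.basis (Equiv.setCongr horb) (spM.basis j) =
      spN.basis ⟨j, horb ▸ j.2⟩ := spM.basis.equiv_apply _ _ _
  rw [hbasis]
  rcases ha with (⟨v, rfl⟩ | ⟨e, rfl⟩) | ⟨e, rfl⟩
  · rw [spM.act_v, spN.act_v]
    split_ifs
    · exact hbasis i
    · exact map_zero _
  · by_cases hq : ∃ q, IsCat (singleE G e) i q
    · obtain ⟨q, hq⟩ := hq
      have hqx := hq.mem_orbit_of_tail i.2
      rw [spM.act_e e i ⟨q, hqx⟩ hq, spN.act_e e ⟨i, horb ▸ i.2⟩ ⟨q, horb ▸ hqx⟩ hq, one_smul,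
        one_smul, hbasis]
    · rw [spM.act_e_zero e i hq, spN.act_e_zero e _ hq, map_zero]
  · by_cases hp : ∃ p, IsCat (singleE G e) p i
    · obtain ⟨p, hp⟩ := hp
      have hpx := hp.tail_mem_orbit i.2
      rw [spM.act_g e ⟨p, hpx⟩ i hp, spN.act_g e ⟨p, horb ▸ hpx⟩ ⟨i, horb ▸ i.2⟩ hp, inv_one,
        one_smul, one_smul, hbasis]
    · rw [spM.act_g_zero e i hp, spN.act_g_zero e _ hp, map_zero]

theorem nonempty_linearEquiv_of_tailEq [IsScalarTower K (LPA G K) M]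
    [IsScalarTower K (LPA G K) N] (spM : ChenSpec G K (fun _ => 1) x M)
    (spN : ChenSpec G K (fun _ => 1) y N) (h : TailEq x y) : Nonempty (M ≃ₗ[LPA G K] N) := by
  let g := spM.basis.equiv spN.basis (Equiv.setCongr (orbit_eq_of_tailEq h))
  have hg := LinearMap.map_smul_of_adjoin_eq_top g.toLinearMap (adjoin_lpaGenerators G K)
    fun a ha => LinearMap.map_smul_of_basis g.toLinearMap spM.basis a
      (basis_equiv_smul_of_mem_lpaGenerators spM spN _ ha)
  exact ⟨{ g with map_smul' := hg }⟩

end Isomorphism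

end DirGraph

theorem stmt_5_general (G : DirGraph) (K : Type) [Field K]
    (x y : G.BPath)
    (M : Type) [AddCommGroup M] [Module K M] [Module (LPA G K) M]
    [IsScalarTower K (LPA G K) M]
    (N : Type) [AddCommGroup N] [Module K N] [Module (LPA G K) N]
    [IsScalarTower K (LPA G K) N]
    (spM : ChenSpec G K (fun _ => 1) x M) (spN : ChenSpec G K (fun _ => 1) y N) :
    (Nonempty (M ≃ₗ[LPA G K] N) ↔ TailEq x y) ∧
      (∀ (u w : G.V) (hu : IsSingular G u) (hw : IsSingular G w),
        x = vertexBPath G u hu → y = vertexBPath G w hw →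
        (Nonempty (M ≃ₗ[LPA G K] N) ↔ u = w)) := by
  have hiso : Nonempty (M ≃ₗ[LPA G K] N) ↔ TailEq x y :=
    ⟨fun ⟨f⟩ => tailEq_of_linearEquiv spM spN f, nonempty_linearEquiv_of_tailEq spM spN⟩
  refine ⟨hiso, fun u w hu hw hxu hyw => hiso.trans ?_⟩
  subst hxu hyw
  exact ⟨eq_of_tailEq_vertexBPath, fun h => by subst h; exact TailEq.refl _⟩

/-- for `x, y ∈ ∂E` not rational, `V_{[x]} ≅ V_{[y]}` as (non-graded)
`L_K(E)`-modules if and only if `[x] = [y]`, i.e. `x` and `y` are tail-equivalent.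
In particular, if `x` and `y` are singular vertices then `V_{[x]} ≅ V_{[y]}` iff `x = y`. -/
theorem stmt_5 (G : DirGraph) (K : Type) [Field K]
    (x y : G.BPath) (hx : ¬ IsRational x) (hy : ¬ IsRational y)
    (M : Type) [AddCommGroup M] [Module K M] [Module (LPA G K) M]
    [IsScalarTower K (LPA G K) M]
    (N : Type) [AddCommGroup N] [Module K N] [Module (LPA G K) N]
    [IsScalarTower K (LPA G K) N]
    (spM : ChenSpec G K (fun _ => 1) x M) (spN : ChenSpec G K (fun _ => 1) y N) :
    (Nonempty (M ≃ₗ[LPA G K] N) ↔ TailEq x y) ∧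
      (∀ (u w : G.V) (hu : IsSingular G u) (hw : IsSingular G w),
        x = vertexBPath G u hu → y = vertexBPath G w hw →
        (Nonempty (M ≃ₗ[LPA G K] N) ↔ u = w)) :=
  stmt_5_general G K x y M N spM spN
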